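/- arXiv:2312.17285 — 2 statements merged into one kernel-verified Lean document; each statement's English description precedes it below -/
import Mathlib

section
/- (Theorem 1, empirical form) Let N be a finite set of neurons with binary activation states c_i(·) ∈ {0,1}, let S and S_neg be nonempty finite sets of inputs (the positive and negative sets), and let t ≤ |N|. Define the empirical frequencies c̄_i = (1/|S|) Σ_{x ∈ S} c_i(x) and c̄_neg,i = (1/|S_neg|) Σ_{y ∈ S_neg} c_i(y). Then the greedy algorithm that iteratively selects t neurons i* maximizing |c̄_{i*} − c̄_neg,i*| among the unselected neurons, setting c_p,i* = 1 if c̄_{i*} ≥ c̄_neg,i* and 0 otherwise, produces a pair (N*, c_p) minimizing (1/|S|) Σ_{x ∈ S} d_H(c^{N*}(x), c_p) − (1/|S_neg|) Σ_{y ∈ S_neg} d_H(c^{N*}(y), c_p) over all subsets N* ⊆ N with |N*| = t and all codes c_p ∈ {0,1}^{N*}. -/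
/-- (Theorem 1, empirical form) With empirical activation frequencies `c̄, c̄neg` over finite
positive/negative sets `S, Sneg`, the greedy algorithm that iteratively selects `t` neurons
maximizing `|c̄_i − c̄neg_i|` among the unselected ones, with code `cp i = 1` iff
`c̄_i ≥ c̄neg_i`, minimizes the empirical objective
`(1/|S|) Σ_{x∈S} d_H(c^{N*}(x), cp) − (1/|Sneg|) Σ_{y∈Sneg} d_H(c^{N*}(y), cp)` over all
size-`t` subsets `N*` and all binary codes. -/
theorem stmt11 {ι X : Type*} [Fintype ι] [DecidableEq ι]
    (S Sneg : Finset X) (hS : S.Nonempty) (hSneg : Sneg.Nonempty)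
    (c : X → ι → Fin 2)
    (t : ℕ) (ht : t ≤ Fintype.card ι)
    (cbar cbarneg : ι → ℝ)
    (hcbar : ∀ i, cbar i = (∑ x ∈ S, ((c x i : ℕ) : ℝ)) / S.card)
    (hcbarneg : ∀ i, cbarneg i = (∑ y ∈ Sneg, ((c y i : ℕ) : ℝ)) / Sneg.card)
    (w : ι → ℝ) (hw : ∀ i, w i = |cbar i - cbarneg i|)
    (g : Fin t → ι)
    (hg : ∀ k : Fin t,
      g k ∉ ((Finset.univ.filter fun j : Fin t => j < k).image g) ∧
      ∀ i ∉ ((Finset.univ.filter fun j : Fin t => j < k).image g), w i ≤ w (g k))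
    (obj : Finset ι → (ι → Fin 2) → ℝ)
    (hobj : ∀ N cp, obj N cp =
      (∑ x ∈ S, ((N.filter fun i => c x i ≠ cp i).card : ℝ)) / S.card -
      (∑ y ∈ Sneg, ((N.filter fun i => c y i ≠ cp i).card : ℝ)) / Sneg.card) :
    ∀ N : Finset ι, N.card = t → ∀ cp : ι → Fin 2,
      obj (Finset.univ.image g) (fun i => if cbarneg i ≤ cbar i then 1 else 0)
        ≤ obj N cp := by
  intro N hN cp
  have hS0 : (S.card : ℝ) ≠ 0 := by
    exact_mod_cast (Finset.card_pos.mpr hS).ne'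
  have hSneg0 : (Sneg.card : ℝ) ≠ 0 := by
    exact_mod_cast (Finset.card_pos.mpr hSneg).ne'
  set G := Finset.univ.image g with hG
  have hginj : Function.Injective g := by
    intro a b hab
    by_contra hne
    rcases lt_or_gt_of_ne hne with h | h
    · exact (hg b).1 (Finset.mem_image.mpr ⟨a, by simp [h], hab⟩)
    · exact (hg a).1 (Finset.mem_image.mpr ⟨b, by simp [h], hab.symm⟩)
  have hGcard : G.card = t := by
    rw [hG, Finset.card_image_of_injective _ hginj, Finset.card_univ, Fintype.card_fin]
  -- rewrite obj as a sum over neurons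
  have key : ∀ (M : Finset ι) (q : ι → Fin 2), obj M q =
      ∑ i ∈ M, ((∑ x ∈ S, (if c x i ≠ q i then (1:ℝ) else 0)) / S.card -
        (∑ y ∈ Sneg, (if c y i ≠ q i then (1:ℝ) else 0)) / Sneg.card) := by
    intro M q
    rw [hobj]
    have h1 : ∀ (T : Finset X), ∑ x ∈ T, ((M.filter fun i => c x i ≠ q i).card : ℝ)
        = ∑ i ∈ M, ∑ x ∈ T, (if c x i ≠ q i then (1:ℝ) else 0) := by
      intro T
      rw [Finset.sum_comm]
      refine Finset.sum_congr rfl fun x _ => ?_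
      rw [Finset.card_filter]
      push_cast
      rfl
    rw [h1 S, h1 Sneg, Finset.sum_div, Finset.sum_div, ← Finset.sum_sub_distrib]
  -- per-neuron value of the term
  have term : ∀ (i : ι) (b : Fin 2),
      (∑ x ∈ S, (if c x i ≠ b then (1:ℝ) else 0)) / S.card -
        (∑ y ∈ Sneg, (if c y i ≠ b then (1:ℝ) else 0)) / Sneg.card =
      if b = 1 then cbarneg i - cbar i else cbar i - cbarneg i := by
    intro i b
    have hv : ∀ v : Fin 2, (if v ≠ b then (1:ℝ) else 0) =
        if b = 1 then 1 - ((v : ℕ) : ℝ) else ((v : ℕ) : ℝ) := by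
      intro v
      fin_cases v <;> fin_cases b <;> norm_num
    simp only [hv]
    by_cases hb : b = 1
    · simp only [if_pos hb, Finset.sum_sub_distrib, Finset.sum_const, nsmul_eq_mul, mul_one,
        hcbar, hcbarneg]
      field_simp
      ring
    · simp only [if_neg hb, hcbar, hcbarneg]
  -- lower bound for arbitrary N, cp
  have lower : -∑ i ∈ N, w i ≤ obj N cp := by
    rw [key, ← Finset.sum_neg_distrib]
    refine Finset.sum_le_sum fun i _ => ?_
    rw [term, hw]
    by_cases hb : cp i = 1
    · rw [if_pos hb]
      have := le_abs_self (cbar i - cbarneg i)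
      linarith
    · rw [if_neg hb]
      have := neg_abs_le (cbar i - cbarneg i)
      linarith
  -- greedy achieves its bound
  have greedy : obj G (fun i => if cbarneg i ≤ cbar i then 1 else 0) = -∑ i ∈ G, w i := by
    rw [key, ← Finset.sum_neg_distrib]
    refine Finset.sum_congr rfl fun i _ => ?_
    rw [term, hw]
    by_cases h : cbarneg i ≤ cbar i
    · rw [if_pos h, if_pos rfl, abs_of_nonneg (by linarith)]
      ring
    · rw [if_neg h]
      norm_num
      rw [abs_of_nonpos (by linarith)]
      ring
  -- greedy set maximizes the total weight among size-t sets
  have hsum : ∑ i ∈ N, w i ≤ ∑ i ∈ G, w i := by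
    have hcards : (N \ G).card = (G \ N).card := by
      rw [Finset.card_sdiff_comm (by rw [hN, hGcard])]
    have hdiff : ∑ i ∈ N \ G, w i ≤ ∑ i ∈ G \ N, w i := by
      by_cases hGN : (G \ N).Nonempty
      · set M := (G \ N).inf' hGN w with hM
        have hNG : ∀ i ∈ N \ G, ∀ j ∈ G, w i ≤ w j := by
          intro i hi j hj
          obtain ⟨k, _, rfl⟩ := Finset.mem_image.mp hj
          refine (hg k).2 i fun hmem => ?_
          have : i ∈ G := by
            obtain ⟨l, _, rfl⟩ := Finset.mem_image.mp hmem
            exact Finset.mem_image.mpr ⟨l, Finset.mem_univ l, rfl⟩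
          exact (Finset.mem_sdiff.mp hi).2 this
        calc ∑ i ∈ N \ G, w i ≤ (N \ G).card • M := by
              refine Finset.sum_le_card_nsmul _ _ _ fun i hi => ?_
              exact Finset.le_inf' _ _ fun j hj => hNG i hi j (Finset.mem_sdiff.mp hj).1
          _ = (G \ N).card • M := by rw [hcards]
          _ ≤ ∑ i ∈ G \ N, w i := Finset.card_nsmul_le_sum _ _ _ fun j hj =>
              Finset.inf'_le _ hj
      · have h1 : G \ N = ∅ := Finset.not_nonempty_iff_eq_empty.mp hGN
        have h2 : N \ G = ∅ := Finset.card_eq_zero.mp (by rw [hcards, h1]; simp)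
        rw [h1, h2]
    calc ∑ i ∈ N, w i = ∑ i ∈ N ∩ G, w i + ∑ i ∈ N \ G, w i :=
          (Finset.sum_inter_add_sum_sdiff N G w).symm
      _ ≤ ∑ i ∈ N ∩ G, w i + ∑ i ∈ G \ N, w i := by linarith
      _ = ∑ i ∈ G ∩ N, w i + ∑ i ∈ G \ N, w i := by rw [Finset.inter_comm]
      _ = ∑ i ∈ G, w i := Finset.sum_inter_add_sum_sdiff G N w
  rw [greedy]
  linarith
end

section
/- Let ι be a finite index set, α a finite type of states, x ~ μ_x and y ~ μ_y random variables with coordinate maps c_i(·) ∈ α, and t ≤ |ι|. For each i ∈ ι define w_i = max_{p ∈ α} ( μ_x(c_i(x) = p) − μ_y(c_i(y) = p) ). Then the minimization over codes c_p ∈ α^{N*} and subsets N* ⊆ ι with |N*| = t of E_{μ_x}[d_H(c^{N*}(x), c_p)] − E_{μ_y}[d_H(c^{N*}(y), c_p)] is equivalent to the maximization over size-t subsets N* of Σ_{i ∈ N*} w_i; precisely, the minimum value of the former equals −max_{|N*| = t} Σ_{i ∈ N*} w_i. -/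
/-!
By linearity of expectation, `E[d_H(c^N(x), cp)] = ∑_{i ∈ N} (1 - P(c_i(x) = cp_i))`, so the
objective equals `-∑_{i ∈ N} (μx(c_i = cp_i) - μy(c_i = cp_i))`. The coordinates of `cp` can be
optimized independently, each at a maximizer of its summand, which leaves `-∑_{i ∈ N} w_i`;
minimizing over the finitely many size-`t` subsets `N` (there is one since `t ≤ |ι|`) is then
maximizing `∑_{i ∈ N} w_i`.
-/

open MeasureTheory Finset

section HammingDistance

variable {ι α Ω : Type*} [DecidableEq α] [MeasurableSpace α] [MeasurableSingletonClass α]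
  [MeasurableSpace Ω] (μ : Measure Ω) [IsProbabilityMeasure μ]

theorem integral_card_filter_ne {C : Ω → ι → α} (hC : ∀ i, Measurable fun ω => C ω i)
    (N : Finset ι) (c : ι → α) :
    ∫ ω, (#{i ∈ N | C ω i ≠ c i} : ℝ) ∂μ = ∑ i ∈ N, (1 - μ.real {ω | C ω i = c i}) := by
  have hmeas (i : ι) : MeasurableSet {ω | C ω i = c i} := hC i (measurableSet_singleton (c i))
  have hcard (ω : Ω) :
      (#{i ∈ N | C ω i ≠ c i} : ℝ) = ∑ i ∈ N, {ω | C ω i = c i}ᶜ.indicator 1 ω := by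
    rw [card_filter]
    push_cast
    exact sum_congr rfl fun i _ => by by_cases h : C ω i = c i <;> simp [h]
  simp_rw [hcard]
  rw [integral_finsetSum _ fun i _ => (integrable_const 1).indicator (hmeas i).compl]
  exact sum_congr rfl fun i _ => by
    rw [integral_indicator_one (hmeas i).compl, probReal_compl_eq_one_sub (hmeas i)]

end HammingDistance

theorem isGreatest_sum_apply_sup' {ι α : Type*} [Fintype α] [Nonempty α] (f : ι → α → ℝ)
    (N : Finset ι) :
    IsGreatest (Set.range fun c : ι → α => ∑ i ∈ N, f i (c i))
      (∑ i ∈ N, univ.sup' univ_nonempty (f i)) := by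
  refine ⟨?_, ?_⟩
  · choose c hc using fun i => exists_mem_eq_sup' univ_nonempty (f i)
    exact ⟨c, sum_congr rfl fun i _ => (hc i).2.symm⟩
  · rintro _ ⟨c, rfl⟩
    exact sum_le_sum fun i _ => le_sup' (f i) (mem_univ (c i))

theorem exists_isGreatest_sum_of_card_eq {ι : Type*} [Fintype ι] (w : ι → ℝ) {t : ℕ}
    (ht : t ≤ Fintype.card ι) :
    ∃ M, IsGreatest {s | ∃ N : Finset ι, #N = t ∧ s = ∑ i ∈ N, w i} M := by
  obtain ⟨N₀, -, hN₀⟩ := exists_subset_card_eq (s := univ) (by simpa using ht)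
  obtain ⟨N, hN, hmax⟩ := Set.exists_max_image {N : Finset ι | #N = t} (fun N => ∑ i ∈ N, w i)
    (Set.toFinite _) ⟨N₀, hN₀⟩
  exact ⟨_, ⟨N, hN, rfl⟩, by rintro _ ⟨N', hN', rfl⟩; exact hmax N' hN'⟩

theorem stmt13_general {ι α Ωx Ωy : Type*} [Fintype ι]
    [Fintype α] [DecidableEq α] [Nonempty α]
    [MeasurableSpace α] [MeasurableSingletonClass α]
    [MeasurableSpace Ωx] [MeasurableSpace Ωy]
    (μx : Measure Ωx) (μy : Measure Ωy)
    [IsProbabilityMeasure μx] [IsProbabilityMeasure μy]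
    (Cx : Ωx → ι → α) (Cy : Ωy → ι → α)
    (hCx : ∀ i, Measurable fun ω => Cx ω i) (hCy : ∀ i, Measurable fun ω => Cy ω i)
    (t : ℕ) (ht : t ≤ Fintype.card ι)
    (w : ι → ℝ)
    (hw : ∀ i, w i = Finset.univ.sup' Finset.univ_nonempty
      (fun p : α => (μx {ω | Cx ω i = p}).toReal - (μy {ω | Cy ω i = p}).toReal))
    (obj : Finset ι → (ι → α) → ℝ)
    (hobj : ∀ N cp, obj N cp =
      (∫ ω, ((N.filter fun i => Cx ω i ≠ cp i).card : ℝ) ∂μx) -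
      (∫ ω, ((N.filter fun i => Cy ω i ≠ cp i).card : ℝ) ∂μy)) :
    ∃ M : ℝ,
      IsGreatest {s : ℝ | ∃ N : Finset ι, N.card = t ∧ s = ∑ i ∈ N, w i} M ∧
      IsLeast {r : ℝ | ∃ (N : Finset ι) (cp : ι → α), N.card = t ∧ r = obj N cp} (-M) := by
  set f : ι → α → ℝ := fun i p => μx.real {ω | Cx ω i = p} - μy.real {ω | Cy ω i = p}
  have hobj' (N : Finset ι) (cp : ι → α) : obj N cp = -∑ i ∈ N, f i (cp i) := by
    rw [hobj, integral_card_filter_ne μx hCx, integral_card_filter_ne μy hCy,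
      ← sum_sub_distrib, ← sum_neg_distrib]
    exact sum_congr rfl fun i _ => by ring
  have hw' : w = fun i => univ.sup' univ_nonempty (f i) := funext hw
  have hsum (N : Finset ι) : IsGreatest (Set.range fun c : ι → α => ∑ i ∈ N, f i (c i))
      (∑ i ∈ N, w i) := hw' ▸ isGreatest_sum_apply_sup' f N
  obtain ⟨M, hM⟩ := exists_isGreatest_sum_of_card_eq w ht
  refine ⟨M, hM, ?_, ?_⟩
  · obtain ⟨N, hN, rfl⟩ := hM.1
    obtain ⟨cp, hcp⟩ := (hsum N).1
    exact ⟨N, cp, hN, by rw [hobj', ← hcp]⟩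
  · rintro _ ⟨N, cp, hN, rfl⟩
    rw [hobj', neg_le_neg_iff]
    exact ((hsum N).2 ⟨cp, rfl⟩).trans (hM.2 ⟨N, hN, rfl⟩)

/-- With per-neuron weights `w i = max_{p ∈ α} (μx(c_i(x) = p) − μy(c_i(y) = p))`, the
minimization over codes `cp` and size-`t` subsets `N*` of
`E_{μx}[d_H(c^{N*}(x), cp)] − E_{μy}[d_H(c^{N*}(y), cp)]` is equivalent to maximizing
`Σ_{i ∈ N*} w i` over size-`t` subsets: the minimum value of the former equals minus the
maximum value of the latter. -/
theorem stmt13 {ι α Ωx Ωy : Type*} [Fintype ι] [DecidableEq ι]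
    [Fintype α] [DecidableEq α] [Nonempty α]
    [MeasurableSpace α] [MeasurableSingletonClass α]
    [MeasurableSpace Ωx] [MeasurableSpace Ωy]
    (μx : Measure Ωx) (μy : Measure Ωy)
    [IsProbabilityMeasure μx] [IsProbabilityMeasure μy]
    (Cx : Ωx → ι → α) (Cy : Ωy → ι → α)
    (hCx : ∀ i, Measurable fun ω => Cx ω i) (hCy : ∀ i, Measurable fun ω => Cy ω i)
    (t : ℕ) (ht : t ≤ Fintype.card ι)
    (w : ι → ℝ)
    (hw : ∀ i, w i = Finset.univ.sup' Finset.univ_nonempty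
      (fun p : α => (μx {ω | Cx ω i = p}).toReal - (μy {ω | Cy ω i = p}).toReal))
    (obj : Finset ι → (ι → α) → ℝ)
    (hobj : ∀ N cp, obj N cp =
      (∫ ω, ((N.filter fun i => Cx ω i ≠ cp i).card : ℝ) ∂μx) -
      (∫ ω, ((N.filter fun i => Cy ω i ≠ cp i).card : ℝ) ∂μy)) :
    ∃ M : ℝ,
      IsGreatest {s : ℝ | ∃ N : Finset ι, N.card = t ∧ s = ∑ i ∈ N, w i} M ∧
      IsLeast {r : ℝ | ∃ (N : Finset ι) (cp : ι → α), N.card = t ∧ r = obj N cp} (-M) :=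
  stmt13_general μx μy Cx Cy hCx hCy t ht w hw obj hobj
end
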